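/- Let f, g be univalent functions on Δ normalized by f(0)=g(0)=0, f'(0)=g'(0)=1, and t ≠ 0 real. Suppose β_f(t) = γ > 0 and that for some ε ∈ (0, γ/|t|) there exists r ∈ (0,1) with sup_{r<|z|<1} |N_g(z) - N_f(z)|(1-|z|²) < ε. Then |β_g(t) - β_f(t)| ≤ |t|ε. -/

import Mathlib

open Real Filter

/-- The integral means spectrum of `f`. -/
noncomputable def intSpec (f : ℂ → ℂ) (t : ℝ) : ℝ :=
  Filter.limsup (fun r : ℝ =>
    Real.log (∫ θ in (0:ℝ)..(2*Real.pi),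
      ‖deriv f ((r:ℂ) * Complex.exp (θ * Complex.I))‖ ^ t) /
      |Real.log (1 - r)|) (nhdsWithin 1 (Set.Iio 1))

section Aux
open Complex Metric Set Filter

lemma deriv_ne_zero_of_injOn {f : ℂ → ℂ} (hf : DifferentiableOn ℂ f (ball 0 1))
    (hinj : Set.InjOn f (ball 0 1)) {z₀ : ℂ} (hz₀ : z₀ ∈ ball 0 1) : deriv f z₀ ≠ 0 := by
  intro hd
  have hball : IsOpen (ball (0:ℂ) 1) := isOpen_ball
  have han : AnalyticOnNhd ℂ f (ball 0 1) := hf.analyticOnNhd hball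
  have hFan : AnalyticAt ℂ (fun z => f z - f z₀) z₀ := (han z₀ hz₀).sub analyticAt_const
  -- F is not eventually zero
  have hne : ¬ (∀ᶠ z in nhds z₀, f z - f z₀ = 0) := by
    intro hev
    obtain ⟨δ, hδ0, hδ⟩ := Metric.eventually_nhds_iff.mp (hev.and (hball.eventually_mem hz₀))
    set z₁ := z₀ + (min (δ/2) (1:ℝ) : ℝ) with hz₁def
    have hmin0 : (0:ℝ) < min (δ/2) 1 := lt_min (by linarith) one_pos
    have hz₁mem : dist z₁ z₀ < δ := by
      simp only [hz₁def, dist_eq_norm, add_sub_cancel_left]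
      rw [Complex.norm_real, Real.norm_eq_abs, abs_of_pos hmin0]
      exact lt_of_le_of_lt (min_le_left _ _) (by linarith)
    have h1 := hδ hz₁mem
    have h0 := hδ (show dist z₀ z₀ < δ by simpa using hδ0)
    have heq : z₁ = z₀ := hinj h1.2 h0.2 (sub_eq_zero.mp h1.1)
    rw [hz₁def, add_eq_left, Complex.ofReal_eq_zero] at heq
    exact hmin0.ne' heq
  have horder : analyticOrderAt (fun z => f z - f z₀) z₀ ≠ ⊤ := fun h => hne (analyticOrderAt_eq_top.mp h)
  obtain ⟨n, hn⟩ := ENat.ne_top_iff_exists.mp horder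
  obtain ⟨G, hG, hG0, hFeq⟩ := hFan.analyticOrderAt_eq_natCast.mp hn.symm
  have hF0 : f z₀ - f z₀ = (z₀ - z₀) ^ n • G z₀ := hFeq.self_of_nhds
  have hn0 : n ≠ 0 := by
    rintro rfl
    simp at hF0
    exact hG0 hF0.symm
  have hn1 : n ≠ 1 := by
    rintro rfl
    have hdF : deriv (fun z => f z - f z₀) z₀ = 0 := by
      rw [deriv_sub_const]; exact hd
    have : HasDerivAt (fun z => (z - z₀) ^ 1 • G z) ((1 : ℂ) * G z₀ + (z₀ - z₀) ^ 1 * deriv G z₀) z₀ := by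
      simpa [Pi.mul_def] using (((hasDerivAt_id z₀).sub_const z₀).mul (hG.differentiableAt.hasDerivAt))
    have hdR : deriv (fun z => (z - z₀) ^ 1 • G z) z₀ = G z₀ := by
      rw [this.deriv]; simp
    have hFeq' : (fun z => f z - f z₀) =ᶠ[nhds z₀] (fun z => (z - z₀) ^ 1 • G z) := hFeq
    rw [hFeq'.deriv_eq, hdR] at hdF
    exact hG0 hdF
  have hn2 : 2 ≤ n := by omega
  have hnC : (n : ℂ) ≠ 0 := Nat.cast_ne_zero.mpr hn0
  set c := G z₀ with hc
  set ψ := fun z => (z - z₀) * Complex.exp ((Complex.log (G z / c) + Complex.log c) / n) with hψdef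
  have hψan : AnalyticAt ℂ ψ z₀ := by
    apply (analyticAt_id.sub analyticAt_const).mul
    apply AnalyticAt.cexp
    apply AnalyticAt.div _ analyticAt_const hnC
    apply AnalyticAt.add _ analyticAt_const
    apply AnalyticAt.clog (hG.div analyticAt_const hG0)
    rw [Pi.div_apply, div_self hG0]
    exact Complex.one_mem_slitPlane
  have hψ0 : ψ z₀ = 0 := by simp [hψdef]
  have hGne : ∀ᶠ z in nhds z₀, G z ≠ 0 := hG.continuousAt.eventually_ne hG0
  have hpow : ∀ᶠ z in nhds z₀, f z - f z₀ = ψ z ^ n := by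
    filter_upwards [hFeq, hGne] with z h1 h2
    rw [h1, hψdef]
    have : Complex.exp ((Complex.log (G z / c) + Complex.log c) / ↑n) ^ n
        = Complex.exp (Complex.log (G z / c) + Complex.log c) := by
      rw [← Complex.exp_nat_mul, mul_div_cancel₀ _ hnC]
    rw [mul_pow, this, Complex.exp_add, Complex.exp_log (div_ne_zero h2 hG0),
      Complex.exp_log hG0, div_mul_cancel₀ _ hG0, smul_eq_mul]
  have hfreq : ∃ᶠ z in nhds z₀, ψ z ≠ ψ z₀ := by
    have hev : ∀ᶠ z in nhdsWithin z₀ {z₀}ᶜ, ψ z ≠ ψ z₀ := by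
      filter_upwards [self_mem_nhdsWithin] with z hz
      rw [hψ0, hψdef]
      exact mul_ne_zero (sub_ne_zero.mpr hz) (Complex.exp_ne_zero _)
    exact hev.frequently.filter_mono nhdsWithin_le_nhds
  rcases hψan.eventually_constant_or_nhds_le_map_nhds with hcst | hmap
  · exact (hcst.and_frequently hfreq).exists.elim fun z hz => hz.2 hz.1
  · rw [hψ0] at hmap
    have hV : {z | (f z - f z₀ = ψ z ^ n) ∧ z ∈ ball (0:ℂ) 1} ∈ nhds z₀ :=
      hpow.and (hball.eventually_mem hz₀)
    have hIm : ψ '' {z | (f z - f z₀ = ψ z ^ n) ∧ z ∈ ball (0:ℂ) 1} ∈ nhds (0:ℂ) :=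
      hmap (image_mem_map hV)
    obtain ⟨δ, hδ0, hδ⟩ := Metric.mem_nhds_iff.mp hIm
    set w : ℂ := ((δ/2 : ℝ) : ℂ) with hw
    have hwne : w ≠ 0 := by
      simp [hw, Complex.ofReal_eq_zero]; positivity
    have hwmem : w ∈ ball (0:ℂ) δ := by
      simp only [hw, mem_ball, dist_zero_right, Complex.norm_real, Real.norm_eq_abs]
      rw [abs_of_pos (by linarith)]; linarith
    set ζ : ℂ := Complex.exp (2 * Real.pi * Complex.I / n) with hζ
    have hζabs : ‖ζ‖ = 1 := by
      rw [hζ, Complex.norm_exp]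
      have : (2 * (Real.pi:ℂ) * Complex.I / n).re = 0 := by
        simp [Complex.div_re]
      rw [this, Real.exp_zero]
    have hζn : ζ ^ n = 1 := by
      rw [hζ, ← Complex.exp_nat_mul, mul_div_cancel₀ _ hnC, Complex.exp_two_pi_mul_I]
    have hζ1 : ζ ≠ 1 := by
      intro h
      obtain ⟨k, hk⟩ := Complex.exp_eq_one_iff.mp (hζ ▸ h)
      have h2πI : (2 * (Real.pi:ℂ) * Complex.I) ≠ 0 := by
        simp [Complex.ofReal_ne_zero, Real.pi_ne_zero, Complex.I_ne_zero]
      have h2πI : (2 * (Real.pi:ℂ) * Complex.I) ≠ 0 := by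
        simp [Complex.ofReal_ne_zero, Real.pi_ne_zero, Complex.I_ne_zero]
      have hk' : 2 * (Real.pi:ℂ) * Complex.I = (k:ℂ) * (2 * (Real.pi:ℂ) * Complex.I) * n :=
        (div_eq_iff hnC).mp hk
      have hmul : (2 * (Real.pi:ℂ) * Complex.I) * 1 = (2 * (Real.pi:ℂ) * Complex.I) * ((k:ℂ) * n) := by
        linear_combination hk'
      have hc1 : (k : ℂ) * n = 1 := (mul_left_cancel₀ h2πI hmul).symm
      have : ((k * n : ℤ) : ℂ) = 1 := by push_cast; exact hc1
      have hkn : k * (n:ℤ) = 1 := by exact_mod_cast this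
      have : (n:ℤ) = 1 ∨ (n:ℤ) = -1 := Int.isUnit_iff.mp
        (IsUnit.of_mul_eq_one (a := (n:ℤ)) k (by linear_combination hkn))
      rcases this with h | h <;> omega
    have hζw : ζ * w ∈ ball (0:ℂ) δ := by
      simp only [mem_ball, dist_zero_right, norm_mul, hζabs, one_mul]
      rw [hw, Complex.norm_real, Real.norm_eq_abs, abs_of_pos (show (0:ℝ) < δ/2 by linarith)]
      linarith
    obtain ⟨z₁, hz₁V, hz₁⟩ := hδ hwmem
    obtain ⟨z₂, hz₂V, hz₂⟩ := hδ hζw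
    have hfz : f z₁ = f z₂ := by
      have e1 : f z₁ - f z₀ = w ^ n := by rw [hz₁V.1, hz₁]
      have e2 : f z₂ - f z₀ = w ^ n := by
        rw [hz₂V.1, hz₂, mul_pow, hζn, one_mul]
      linear_combination e1 - e2
    have hz12 : z₁ ≠ z₂ := by
      intro h
      rw [h, hz₂] at hz₁
      have h1w : ζ * w = 1 * w := by rw [one_mul]; exact hz₁
      exact hζ1 (mul_right_cancel₀ hwne h1w)
    exact hz12 (hinj hz₁V.2 hz₂V.2 hfz)
 
 
lemma hasDerivAt_log_abs_of_ne {φ : ℝ → ℂ} {φ' : ℂ} {s : ℝ} (hφ : HasDerivAt φ φ' s) 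
    (hne : φ s ≠ 0) : 
    HasDerivAt (fun s => Real.log (‖φ s‖)) ((φ' / φ s).re) s := by 
  have hre : HasDerivAt (fun s => (φ s).re) φ'.re s := Complex.reCLM.hasFDerivAt.comp_hasDerivAt s hφ 
  have him : HasDerivAt (fun s => (φ s).im) φ'.im s := Complex.imCLM.hasFDerivAt.comp_hasDerivAt s hφ 
  have hv : HasDerivAt (fun s => Complex.normSq (φ s)) 
      (φ'.re * (φ s).re + (φ s).re * φ'.re + (φ'.im * (φ s).im + (φ s).im * φ'.im)) s := by 
    have := (hre.mul hre).add (him.mul him) 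
    simpa [Complex.normSq_apply, Pi.mul_def, Pi.add_def] using this 
  have hvne : Complex.normSq (φ s) ≠ 0 := by 
    simpa [Complex.normSq_eq_zero] using hne 
  have hlog := (hv.log hvne).div_const 2 
  have heq : (fun s => Real.log (‖φ s‖)) = fun s => Real.log (Complex.normSq (φ s)) / 2 := by 
    funext x 
    rw [Complex.norm_def, Real.log_sqrt (Complex.normSq_nonneg _)] 
  rw [heq] 
  refine hlog.congr_deriv ?_ 
  rw [Complex.div_re] 
  ring 
 
lemma hasDerivAt_log_abs_deriv {f : ℂ → ℂ} (hf : DifferentiableOn ℂ f (ball 0 1)) 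
    (hf' : ∀ z ∈ ball (0:ℂ) 1, deriv f z ≠ 0) {z : ℂ} {s : ℝ} 
    (hw : ((s:ℂ)*z) ∈ ball (0:ℂ) 1) : 
    HasDerivAt (fun s : ℝ => Real.log (‖deriv f ((s:ℂ)*z)‖)) 
      ((z * (deriv (deriv f) ((s:ℂ)*z) / deriv f ((s:ℂ)*z))).re) s := by 
  have hQ : AnalyticOnNhd ℂ (deriv f) (ball (0:ℂ) 1) := (hf.analyticOnNhd isOpen_ball).deriv 
  have hFd : HasDerivAt (deriv f) (deriv (deriv f) ((s:ℂ)*z)) ((s:ℂ)*z) := 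
    (hQ _ hw).differentiableAt.hasDerivAt 
  have hxz : HasDerivAt (fun x : ℂ => x * z) z (s:ℂ) := by 
    simpa using (hasDerivAt_id (s:ℂ)).mul_const z 
  have he : HasDerivAt (fun x : ℂ => deriv f (x * z)) (deriv (deriv f) ((s:ℂ)*z) * z) (s:ℂ) := 
    hFd.comp (h := fun x : ℂ => x * z) (s:ℂ) hxz 
  have hφ : HasDerivAt (fun y : ℝ => deriv f ((y:ℂ) * z)) (deriv (deriv f) ((s:ℂ)*z) * z) s := 
    he.comp_ofReal 
  have := hasDerivAt_log_abs_of_ne hφ (hf' _ hw) 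
  convert this using 2 
  ring 
 
lemma log_ratio_bound {f g : ℂ → ℂ} 
    (hf : DifferentiableOn ℂ f (ball 0 1)) (hg : DifferentiableOn ℂ g (ball 0 1)) 
    (hf' : ∀ z ∈ ball (0:ℂ) 1, deriv f z ≠ 0) (hg' : ∀ z ∈ ball (0:ℂ) 1, deriv g z ≠ 0) 
    (hf0' : deriv f 0 = 1) (hg0' : deriv g 0 = 1) 
    {ε M r : ℝ} (hM0 : 0 ≤ M) (hε0 : 0 < ε) (hr1 : r < 1) 
    (hM : ∀ w ∈ closedBall (0:ℂ) r, 
      ‖deriv (deriv g) w / deriv g w - deriv (deriv f) w / deriv f w‖ ≤ M) 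
    (hN : ∀ w : ℂ, r < ‖w‖ → ‖w‖ < 1 → 
      ‖deriv (deriv g) w / deriv g w - deriv (deriv f) w / deriv f w‖ * (1 - ‖w‖^2) < ε) 
    {z : ℂ} (hz : z ∈ ball (0:ℂ) 1) : 
    |Real.log (‖deriv g z‖) - Real.log (‖deriv f z‖)| 
      ≤ M + ε/2 * (Real.log (1+‖z‖) - Real.log (1-‖z‖)) := by 
  set ρ : ℝ := ‖z‖ with hρdef 
  have hρ0 : 0 ≤ ρ := norm_nonneg z 
  have hρ1 : ρ < 1 := mem_ball_zero_iff.mp hz 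
  have memb : ∀ s ∈ Icc (0:ℝ) 1, ((s:ℂ)*z) ∈ ball (0:ℂ) 1 := by 
    intro s hs 
    rw [mem_ball_zero_iff, norm_mul, Complex.norm_real, Real.norm_eq_abs, 
      _root_.abs_of_nonneg hs.1] 
    calc s * ρ ≤ 1 * ρ := by nlinarith [hs.2] 
    _ < 1 := by simpa using hρ1 
  set u : ℝ → ℝ := fun s => Real.log (‖deriv g ((s:ℂ)*z)‖) 
      - Real.log (‖deriv f ((s:ℂ)*z)‖) with hudef 
  set d : ℝ → ℝ := fun s => (z * (deriv (deriv g) ((s:ℂ)*z) / deriv g ((s:ℂ)*z) 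
      - deriv (deriv f) ((s:ℂ)*z) / deriv f ((s:ℂ)*z))).re with hddef 
  set B : ℝ → ℝ := fun s => M*s + ε/2*(Real.log (1+s*ρ) - Real.log (1-s*ρ)) with hBdef 
  set b : ℝ → ℝ := fun s => M + ε*ρ/(1-s^2*ρ^2) with hbdef 
  have hu : ∀ s ∈ Icc (0:ℝ) 1, HasDerivAt u (d s) s := by 
    intro s hs 
    have := (hasDerivAt_log_abs_deriv hg hg' (memb s hs)).sub 
      (hasDerivAt_log_abs_deriv hf hf' (memb s hs)) 
    refine this.congr_deriv ?_ 
    simp [hddef, mul_sub, Complex.sub_re] 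
  have hsρpos : ∀ s ∈ Icc (0:ℝ) 1, 0 < 1 + s*ρ ∧ 0 < 1 - s*ρ := by 
    intro s hs 
    constructor 
    · nlinarith [hs.1, hs.2] 
    · nlinarith [hs.1, hs.2] 
  have hb_nonneg : ∀ s ∈ Icc (0:ℝ) 1, 0 < 1 - s^2*ρ^2 := by 
    intro s hs 
    have h1 : s^2 ≤ 1 := by nlinarith [hs.1, hs.2] 
    have h2 : ρ^2 < 1 := by nlinarith 
    nlinarith [sq_nonneg s, sq_nonneg ρ] 
  have hB : ∀ s ∈ Icc (0:ℝ) 1, HasDerivAt B (b s) s := by 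
    intro s hs 
    obtain ⟨h1, h2⟩ := hsρpos s hs 
    have hl1 : HasDerivAt (fun s : ℝ => Real.log (1 + s*ρ)) (ρ/(1+s*ρ)) s := by 
      have := (((hasDerivAt_id s).mul_const ρ).const_add 1).log h1.ne' 
      simpa using this 
    have hl2 : HasDerivAt (fun s : ℝ => Real.log (1 - s*ρ)) (-ρ/(1-s*ρ)) s := by 
      have := (((hasDerivAt_id s).mul_const ρ).const_sub 1).log h2.ne' 
      simpa using this 
    have := (((hasDerivAt_id s).const_mul M).add ((hl1.sub hl2).const_mul (ε/2))) 
    refine this.congr_deriv ?_ 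
    have hX : (1:ℝ) - s^2*ρ^2 ≠ 0 := (hb_nonneg s hs).ne' 
    rw [hbdef] 
    have h1' : 1 + ρ*s ≠ 0 := by rw [mul_comm]; exact h1.ne' 
    have h2' : 1 - ρ*s ≠ 0 := by rw [mul_comm]; exact h2.ne' 
    have hX' : (1:ℝ) - ρ^2*s^2 ≠ 0 := by rw [mul_comm]; exact hX 
    field_simp 
    ring 
  have hd_le : ∀ s ∈ Icc (0:ℝ) 1, |d s| ≤ b s := by 
    intro s hs 
    have hpos := hb_nonneg s hs 
    set ν := ‖deriv (deriv g) ((s:ℂ)*z) / deriv g ((s:ℂ)*z) 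
        - deriv (deriv f) ((s:ℂ)*z) / deriv f ((s:ℂ)*z)‖ with hνdef 
    have hν0 : 0 ≤ ν := norm_nonneg _ 
    have habs : |d s| ≤ ρ * ν := by 
      calc |d s| ≤ ‖z * (deriv (deriv g) ((s:ℂ)*z) / deriv g ((s:ℂ)*z) 
          - deriv (deriv f) ((s:ℂ)*z) / deriv f ((s:ℂ)*z))‖ := Complex.abs_re_le_norm _ 
      _ = ρ * ν := by rw [norm_mul] 
    have hnorm : ‖(s:ℂ)*z‖ = s*ρ := by 
      rw [norm_mul, Complex.norm_real, Real.norm_eq_abs, _root_.abs_of_nonneg hs.1] 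
    have hterm2 : 0 ≤ ε*ρ/(1-s^2*ρ^2) := by positivity 
    rcases le_or_gt (‖(s:ℂ)*z‖) r with hcase | hcase 
    · have := hM _ (mem_closedBall_zero_iff.mpr hcase) 
      rw [hbdef] 
      calc |d s| ≤ ρ * ν := habs 
      _ ≤ 1 * ν := by apply mul_le_mul_of_nonneg_right hρ1.le hν0 
      _ ≤ M := by rw [one_mul]; exact this 
      _ ≤ M + ε*ρ/(1-s^2*ρ^2) := by linarith 
    · have hlt1 : ‖(s:ℂ)*z‖ < 1 := mem_ball_zero_iff.mp (memb s hs) 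
      have := hN _ hcase hlt1 
      rw [hnorm] at this 
      have hsq : 0 < 1 - (s*ρ)^2 := by nlinarith [hb_nonneg s hs] 
      have hν_le : ν ≤ ε/(1-s^2*ρ^2) := by 
        rw [le_div_iff₀ (by nlinarith)] 
        nlinarith 
      rw [hbdef] 
      calc |d s| ≤ ρ * ν := habs 
      _ ≤ ρ * (ε/(1-s^2*ρ^2)) := by gcongr 
      _ = ε*ρ/(1-s^2*ρ^2) := by ring 
      _ ≤ M + ε*ρ/(1-s^2*ρ^2) := by linarith 
  -- monotonicity of B - u and B + u 
  have key : ∀ (σ : ℝ), σ = 1 ∨ σ = -1 → (fun s => B s + σ * u s) 0 ≤ (fun s => B s + σ * u s) 1 := by 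
    intro σ hσ 
    have hσd : ∀ s ∈ Icc (0:ℝ) 1, HasDerivAt (fun s => B s + σ * u s) (b s + σ * d s) s := 
      fun s hs => (hB s hs).add ((hu s hs).const_mul σ) 
    have hmono : MonotoneOn (fun s => B s + σ * u s) (Icc (0:ℝ) 1) := by 
      apply monotoneOn_of_deriv_nonneg (convex_Icc 0 1) 
      · exact fun s hs => ((hσd s hs).continuousAt.continuousWithinAt) 
      · rw [interior_Icc] 
        exact fun s hs => ((hσd s (Ioo_subset_Icc_self hs)).differentiableAt.differentiableWithinAt) 
      · rw [interior_Icc] 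
        intro s hs 
        rw [(hσd s (Ioo_subset_Icc_self hs)).deriv] 
        have h1 := hd_le s (Ioo_subset_Icc_self hs) 
        have h2 := abs_le.mp h1 
        rcases hσ with rfl | rfl 
        · simp only [one_mul]; linarith [h2.2] 
        · simp only [neg_one_mul]; linarith [h2.1] 
    exact hmono (left_mem_Icc.mpr zero_le_one) (right_mem_Icc.mpr zero_le_one) zero_le_one 
  have hu0 : u 0 = 0 := by 
    simp only [hudef, Complex.ofReal_zero, zero_mul, hf0', hg0'] 
    simp 
  have hB0 : B 0 = 0 := by simp [hBdef] 
  have hu1 : u 1 = Real.log (‖deriv g z‖) - Real.log (‖deriv f z‖) := by 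
    simp [hudef] 
  have hB1 : B 1 = M + ε/2*(Real.log (1+ρ) - Real.log (1-ρ)) := by simp [hBdef] 
  have k1 := key 1 (Or.inl rfl) 
  have k2 := key (-1) (Or.inr rfl) 
  simp only [hu0, hB0, hu1, hB1] at k1 k2 
  rw [abs_le] 
  exact ⟨by linarith, by linarith⟩ 
 
lemma integral_means_le {F G : ℂ → ℂ} 
    (hFc : ContinuousOn (deriv F) (ball (0:ℂ) 1)) (hGc : ContinuousOn (deriv G) (ball (0:ℂ) 1)) 
    (hF' : ∀ z ∈ ball (0:ℂ) 1, deriv F z ≠ 0) (hG' : ∀ z ∈ ball (0:ℂ) 1, deriv G z ≠ 0) 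
    {t : ℝ} {ρ : ℝ} (hρ0 : 0 < ρ) (hρ1 : ρ < 1) {c : ℝ} 
    (hlog : ∀ θ : ℝ, t * (Real.log (‖deriv G ((ρ:ℂ) * Complex.exp (θ * Complex.I))‖) 
      - Real.log (‖deriv F ((ρ:ℂ) * Complex.exp (θ * Complex.I))‖)) ≤ c) : 
    Real.log (∫ θ in (0:ℝ)..(2*Real.pi), 
        ‖deriv G ((ρ:ℂ) * Complex.exp (θ * Complex.I))‖ ^ t) 
      ≤ c + Real.log (∫ θ in (0:ℝ)..(2*Real.pi), 
        ‖deriv F ((ρ:ℂ) * Complex.exp (θ * Complex.I))‖ ^ t) := by 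
  have hmem : ∀ θ : ℝ, ((ρ:ℂ) * Complex.exp (θ * Complex.I)) ∈ ball (0:ℂ) 1 := by 
    intro θ 
    rw [mem_ball_zero_iff, norm_mul, Complex.norm_real, Real.norm_eq_abs, 
      _root_.abs_of_pos hρ0, Complex.norm_exp] 
    simp [hρ1] 
  have hpath : Continuous fun θ : ℝ => (ρ:ℂ) * Complex.exp (θ * Complex.I) := by 
    continuity 
  have habsF : Continuous fun θ : ℝ => ‖deriv F ((ρ:ℂ) * Complex.exp (θ * Complex.I))‖ := 
    continuous_norm.comp (hFc.comp_continuous hpath hmem) 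
  have habsG : Continuous fun θ : ℝ => ‖deriv G ((ρ:ℂ) * Complex.exp (θ * Complex.I))‖ := 
    continuous_norm.comp (hGc.comp_continuous hpath hmem) 
  have hposF : ∀ θ : ℝ, 0 < ‖deriv F ((ρ:ℂ) * Complex.exp (θ * Complex.I))‖ := 
    fun θ => norm_pos_iff.mpr (hF' _ (hmem θ)) 
  have hposG : ∀ θ : ℝ, 0 < ‖deriv G ((ρ:ℂ) * Complex.exp (θ * Complex.I))‖ := 
    fun θ => norm_pos_iff.mpr (hG' _ (hmem θ)) 
  have hcF : Continuous fun θ : ℝ => 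
      ‖deriv F ((ρ:ℂ) * Complex.exp (θ * Complex.I))‖ ^ t := 
    habsF.rpow_const (fun θ => Or.inl (hposF θ).ne') 
  have hcG : Continuous fun θ : ℝ => 
      ‖deriv G ((ρ:ℂ) * Complex.exp (θ * Complex.I))‖ ^ t := 
    habsG.rpow_const (fun θ => Or.inl (hposG θ).ne') 
  have hIntF : IntervalIntegrable _ MeasureTheory.volume (0:ℝ) (2*Real.pi) := hcF.intervalIntegrable (0:ℝ) (2*Real.pi) 
  have hIntG : IntervalIntegrable _ MeasureTheory.volume (0:ℝ) (2*Real.pi) := hcG.intervalIntegrable (0:ℝ) (2*Real.pi) 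
  have h2π : (0:ℝ) < 2*Real.pi := by positivity 
  have hpoint : ∀ θ : ℝ, 
      ‖deriv G ((ρ:ℂ) * Complex.exp (θ * Complex.I))‖ ^ t 
      ≤ Real.exp c * ‖deriv F ((ρ:ℂ) * Complex.exp (θ * Complex.I))‖ ^ t := by 
    intro θ 
    rw [Real.rpow_def_of_pos (hposG θ), Real.rpow_def_of_pos (hposF θ), ← Real.exp_add] 
    apply Real.exp_le_exp.mpr 
    have h' := hlog θ 
    rw [mul_sub] at h' 
    nlinarith [h'] 
  have hmono : (∫ θ in (0:ℝ)..(2*Real.pi), 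
      ‖deriv G ((ρ:ℂ) * Complex.exp (θ * Complex.I))‖ ^ t) 
      ≤ ∫ θ in (0:ℝ)..(2*Real.pi), 
      Real.exp c * ‖deriv F ((ρ:ℂ) * Complex.exp (θ * Complex.I))‖ ^ t := by 
    apply intervalIntegral.integral_mono_on h2π.le hIntG (hIntF.const_mul _) 
    exact fun θ _ => hpoint θ 
  rw [intervalIntegral.integral_const_mul] at hmono 
  have hposIF : 0 < ∫ θ in (0:ℝ)..(2*Real.pi), 
      ‖deriv F ((ρ:ℂ) * Complex.exp (θ * Complex.I))‖ ^ t := by 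
    apply intervalIntegral.intervalIntegral_pos_of_pos_on hIntF _ h2π 
    intro θ _ 
    exact Real.rpow_pos_of_pos (hposF θ) t 
  have hposIG : 0 < ∫ θ in (0:ℝ)..(2*Real.pi), 
      ‖deriv G ((ρ:ℂ) * Complex.exp (θ * Complex.I))‖ ^ t := by 
    apply intervalIntegral.intervalIntegral_pos_of_pos_on hIntG _ h2π 
    intro θ _ 
    exact Real.rpow_pos_of_pos (hposG θ) t 
  calc Real.log (∫ θ in (0:ℝ)..(2*Real.pi), 
      ‖deriv G ((ρ:ℂ) * Complex.exp (θ * Complex.I))‖ ^ t) 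
      ≤ Real.log (Real.exp c * ∫ θ in (0:ℝ)..(2*Real.pi), 
        ‖deriv F ((ρ:ℂ) * Complex.exp (θ * Complex.I))‖ ^ t) := 
        Real.log_le_log hposIG hmono 
    _ = c + Real.log (∫ θ in (0:ℝ)..(2*Real.pi), 
        ‖deriv F ((ρ:ℂ) * Complex.exp (θ * Complex.I))‖ ^ t) := by 
        rw [Real.log_mul (Real.exp_ne_zero c) hposIF.ne', Real.log_exp]
open Real Filter Complex Metric Set

lemma limsup_facts {l : Filter ℝ} [l.NeBot] {u : ℝ → ℝ} {γ : ℝ}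
    (h : Filter.limsup u l = γ) (h0 : γ ≠ 0) :
    IsBoundedUnder (· ≤ ·) l u ∧ IsCoboundedUnder (· ≤ ·) l u := by
  constructor
  · by_contra hb
    apply h0; rw [← h, Filter.limsup_eq]
    have hempty : {a | ∀ᶠ n in l, u n ≤ a} = ∅ := by
      ext a
      simp only [mem_empty_iff_false, iff_false, mem_setOf_eq]
      intro ha
      exact hb ⟨a, by simpa [eventually_map] using ha⟩
    rw [hempty, Real.sInf_empty]
  · by_contra hb
    apply h0; rw [← h, Filter.limsup_eq]
    apply Real.sInf_of_not_bddBelow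
    intro hbdd
    apply hb
    obtain ⟨b, hb'⟩ := hbdd
    refine ⟨b, fun a ha => ?_⟩
    exact hb' (by simpa [eventually_map] using ha)

lemma tendsto_w (A B : ℝ) :
    Tendsto (fun ρ : ℝ => (A + B*(Real.log (1+ρ) - Real.log (1-ρ))) / -(Real.log (1-ρ)))
      (nhdsWithin 1 (Set.Iio 1)) (nhds B) := by
  set l := nhdsWithin (1:ℝ) (Set.Iio 1) with hl
  have hEv : ∀ᶠ ρ in l, ρ ∈ Set.Ioo (0:ℝ) 1 := by
    have h1 : ∀ᶠ ρ in l, (0:ℝ) < ρ := eventually_nhdsWithin_of_eventually_nhds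
      (eventually_gt_nhds one_pos)
    have h2 : ∀ᶠ ρ in l, ρ ∈ Set.Iio (1:ℝ) := eventually_mem_nhdsWithin
    filter_upwards [h1, h2] with ρ ha hb
    exact ⟨ha, hb⟩
  have h1ρ : Tendsto (fun ρ : ℝ => 1 + ρ) l (nhds 2) := by
    have hc : Continuous (fun ρ : ℝ => 1 + ρ) := by continuity
    have := (hc.tendsto (1:ℝ)).mono_left (nhdsWithin_le_nhds (s := Set.Iio 1))
    norm_num at this
    exact this
  have hnum : Tendsto (fun ρ : ℝ => A + B * Real.log (1+ρ)) l
      (nhds (A + B * Real.log 2)) := by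
    apply tendsto_const_nhds.add
    apply Tendsto.const_mul
    exact ((Real.continuousAt_log (by norm_num)).tendsto).comp h1ρ
  have hden : Tendsto (fun ρ : ℝ => -(Real.log (1-ρ))) l atTop := by
    have ha : Tendsto (fun ρ : ℝ => 1 - ρ) l (nhdsWithin 0 (Set.Ioi 0)) := by
      rw [tendsto_nhdsWithin_iff]
      constructor
      · have hc : Continuous (fun ρ : ℝ => 1 - ρ) := by continuity
        have := (hc.tendsto (1:ℝ)).mono_left (nhdsWithin_le_nhds (s := Set.Iio 1))
        norm_num at this
        exact this
      · filter_upwards [eventually_mem_nhdsWithin] with ρ hρ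
        simp only [Set.mem_Ioi]
        simp only [Set.mem_Iio] at hρ
        linarith
    have hb : Tendsto (fun ρ : ℝ => Real.log (1-ρ)) l atBot :=
      Real.tendsto_log_nhdsGT_zero.comp ha
    exact tendsto_neg_atBot_atTop.comp hb
  have hw0 : Tendsto (fun ρ : ℝ => (A + B * Real.log (1+ρ)) / -(Real.log (1-ρ))) l (nhds 0) :=
    hnum.div_atTop hden
  have hwEq : ∀ᶠ ρ in l,
      (A + B * Real.log (1+ρ)) / -(Real.log (1-ρ)) + B
      = (A + B*(Real.log (1+ρ) - Real.log (1-ρ))) / -(Real.log (1-ρ)) := by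
    filter_upwards [hEv] with ρ hρ
    obtain ⟨hρ1, hρ2⟩ := hρ
    have hlogneg : Real.log (1-ρ) < 0 := Real.log_neg (by linarith) (by linarith)
    have hne : Real.log (1-ρ) ≠ 0 := hlogneg.ne
    have hne2 : -(Real.log (1-ρ)) ≠ 0 := neg_ne_zero.mpr hne
    rw [div_add' _ _ _ hne2]
    congr 1
    ring
  have := hw0.add (tendsto_const_nhds (x := B))
  rw [zero_add] at this
  exact Tendsto.congr' hwEq this
end Aux

section Main
open Complex Metric Set Filter

theorem stmt_11 (f g : ℂ → ℂ)
    (hf : DifferentiableOn ℂ f (Metric.ball 0 1)) (hfinj : Set.InjOn f (Metric.ball 0 1))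
    (hg : DifferentiableOn ℂ g (Metric.ball 0 1)) (hginj : Set.InjOn g (Metric.ball 0 1))
    (hf0 : f 0 = 0) (hf0' : deriv f 0 = 1) (hg0 : g 0 = 0) (hg0' : deriv g 0 = 1)
    (t : ℝ) (ht : t ≠ 0) (γ : ℝ) (hγ : intSpec f t = γ) (hγpos : 0 < γ)
    (ε : ℝ) (hε0 : 0 < ε) (hε1 : ε < γ / |t|)
    (r : ℝ) (hr0 : 0 < r) (hr1 : r < 1)
    (hN : ∀ z : ℂ, r < ‖z‖ → ‖z‖ < 1 →
      ‖deriv (deriv g) z / deriv g z - deriv (deriv f) z / deriv f z‖ *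
        (1 - ‖z‖^2) < ε) :
    |intSpec g t - intSpec f t| ≤ |t| * ε := by
  have hf' : ∀ z ∈ Metric.ball (0:ℂ) 1, deriv f z ≠ 0 :=
    fun z hz => deriv_ne_zero_of_injOn hf hfinj hz
  have hg' : ∀ z ∈ Metric.ball (0:ℂ) 1, deriv g z ≠ 0 :=
    fun z hz => deriv_ne_zero_of_injOn hg hginj hz
  have hfan : AnalyticOnNhd ℂ f (Metric.ball (0:ℂ) 1) := hf.analyticOnNhd Metric.isOpen_ball
  have hgan : AnalyticOnNhd ℂ g (Metric.ball (0:ℂ) 1) := hg.analyticOnNhd Metric.isOpen_ball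
  have hfd : ContinuousOn (deriv f) (Metric.ball (0:ℂ) 1) := hfan.deriv.continuousOn
  have hgd : ContinuousOn (deriv g) (Metric.ball (0:ℂ) 1) := hgan.deriv.continuousOn
  have hνcont : ContinuousOn (fun w : ℂ =>
      ‖deriv (deriv g) w / deriv g w - deriv (deriv f) w / deriv f w‖)
      (Metric.ball (0:ℂ) 1) := by
    apply continuous_norm.comp_continuousOn
    exact ((hgan.deriv.deriv.continuousOn.div hgd hg').sub
      (hfan.deriv.deriv.continuousOn.div hfd hf'))
  have hsub : Metric.closedBall (0:ℂ) r ⊆ Metric.ball (0:ℂ) 1 := fun w hw => by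
    rw [Metric.mem_ball, dist_zero_right]
    exact lt_of_le_of_lt (by simpa [dist_zero_right] using hw) hr1
  obtain ⟨w₀, hw₀K, hMmax'⟩ := (isCompact_closedBall (0:ℂ) r).exists_isMaxOn
    ⟨0, Metric.mem_closedBall_self hr0.le⟩ (hνcont.mono hsub)
  have hMmax : ∀ w ∈ Metric.closedBall (0:ℂ) r,
      ‖deriv (deriv g) w / deriv g w - deriv (deriv f) w / deriv f w‖
      ≤ ‖deriv (deriv g) w₀ / deriv g w₀ - deriv (deriv f) w₀ / deriv f w₀‖ :=
    fun w hw => hMmax' hw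
  set M : ℝ := ‖deriv (deriv g) w₀ / deriv g w₀ - deriv (deriv f) w₀ / deriv f w₀‖
    with hMdef
  have hM0 : 0 ≤ M := norm_nonneg _
  have hlogb : ∀ z ∈ Metric.ball (0:ℂ) 1,
      |Real.log (‖deriv g z‖) - Real.log (‖deriv f z‖)|
      ≤ M + ε/2 * (Real.log (1+‖z‖) - Real.log (1-‖z‖)) :=
    fun z hz => log_ratio_bound hf hg hf' hg' hf0' hg0' hM0 hε0 hr1 hMmax hN hz
  set l : Filter ℝ := nhdsWithin 1 (Set.Iio 1) with hldef
  set uf : ℝ → ℝ := fun ρ : ℝ =>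
    Real.log (∫ θ in (0:ℝ)..(2*Real.pi),
      ‖deriv f ((ρ:ℂ) * Complex.exp (θ * Complex.I))‖ ^ t) /
      |Real.log (1 - ρ)| with hufdef
  set ug : ℝ → ℝ := fun ρ : ℝ =>
    Real.log (∫ θ in (0:ℝ)..(2*Real.pi),
      ‖deriv g ((ρ:ℂ) * Complex.exp (θ * Complex.I))‖ ^ t) /
      |Real.log (1 - ρ)| with hugdef
  have hspecf : intSpec f t = Filter.limsup uf l := rfl
  have hspecg : intSpec g t = Filter.limsup ug l := rfl
  set A : ℝ := |t| * M with hAdef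
  set L : ℝ := |t| * (ε/2) with hLdef
  set w : ℝ → ℝ := fun ρ : ℝ =>
    (A + L*(Real.log (1+ρ) - Real.log (1-ρ))) / -(Real.log (1-ρ)) with hwdef
  have hwt : Filter.Tendsto w l (nhds L) := tendsto_w A L
  have hEv : ∀ᶠ ρ in l, ρ ∈ Set.Ioo (0:ℝ) 1 := by
    have h1 : ∀ᶠ ρ in l, (0:ℝ) < ρ := eventually_nhdsWithin_of_eventually_nhds
      (eventually_gt_nhds one_pos)
    have h2 : ∀ᶠ ρ in l, ρ ∈ Set.Iio (1:ℝ) := eventually_mem_nhdsWithin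
    filter_upwards [h1, h2] with ρ ha hb
    exact ⟨ha, hb⟩
  have hEvineq : ∀ᶠ ρ in l, ug ρ ≤ w ρ + uf ρ ∧ uf ρ ≤ w ρ + ug ρ := by
    filter_upwards [hEv] with ρ hρ
    obtain ⟨hρ1, hρ2⟩ := hρ
    have hmemθ : ∀ θ : ℝ, ((ρ:ℂ) * Complex.exp (θ * Complex.I)) ∈ Metric.ball (0:ℂ) 1 := by
      intro θ
      rw [mem_ball_zero_iff, norm_mul, Complex.norm_real, Real.norm_eq_abs,
        _root_.abs_of_pos hρ1, Complex.norm_exp]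
      simp [hρ2]
    have hnormθ : ∀ θ : ℝ, ‖(ρ:ℂ) * Complex.exp (θ * Complex.I)‖ = ρ := by
      intro θ
      rw [norm_mul, Complex.norm_real, Real.norm_eq_abs, _root_.abs_of_pos hρ1,
        Complex.norm_exp]
      simp
    set c : ℝ := A + L * (Real.log (1+ρ) - Real.log (1-ρ)) with hcdef
    have hkey : ∀ θ : ℝ,
        |Real.log (‖deriv g ((ρ:ℂ) * Complex.exp (θ * Complex.I))‖)
        - Real.log (‖deriv f ((ρ:ℂ) * Complex.exp (θ * Complex.I))‖)|
        ≤ M + ε/2 * (Real.log (1+ρ) - Real.log (1-ρ)) := by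
      intro θ
      have := hlogb _ (hmemθ θ)
      rwa [hnormθ θ] at this
    have habsmul : ∀ x : ℝ, |x| ≤ M + ε/2 * (Real.log (1+ρ) - Real.log (1-ρ)) → t * x ≤ c := by
      intro x hx
      calc t * x ≤ |t * x| := le_abs_self _
      _ = |t| * |x| := abs_mul t x
      _ ≤ |t| * (M + ε/2 * (Real.log (1+ρ) - Real.log (1-ρ))) :=
          mul_le_mul_of_nonneg_left hx (abs_nonneg t)
      _ = c := by rw [hcdef, hAdef, hLdef]; ring
    have h1 : ∀ θ : ℝ, t * (Real.log (‖deriv g ((ρ:ℂ) * Complex.exp (θ * Complex.I))‖)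
        - Real.log (‖deriv f ((ρ:ℂ) * Complex.exp (θ * Complex.I))‖)) ≤ c :=
      fun θ => habsmul _ (hkey θ)
    have h2 : ∀ θ : ℝ, t * (Real.log (‖deriv f ((ρ:ℂ) * Complex.exp (θ * Complex.I))‖)
        - Real.log (‖deriv g ((ρ:ℂ) * Complex.exp (θ * Complex.I))‖)) ≤ c := by
      intro θ
      apply habsmul
      rw [abs_sub_comm]
      exact hkey θ
    have hI1 := integral_means_le hfd hgd hf' hg' hρ1 hρ2 h1
    have hI2 := integral_means_le hgd hfd hg' hf' hρ1 hρ2 h2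
    have hlogneg : Real.log (1-ρ) < 0 := Real.log_neg (by linarith) (by linarith)
    have hp : 0 < -(Real.log (1-ρ)) := by linarith
    have habs' : |Real.log (1 - ρ)| = -(Real.log (1-ρ)) := abs_of_neg hlogneg
    constructor
    · show ug ρ ≤ w ρ + uf ρ
      rw [hugdef, hufdef, hwdef]
      simp only [habs']
      rw [← add_div]
      gcongr
    · show uf ρ ≤ w ρ + ug ρ
      rw [hugdef, hufdef, hwdef]
      simp only [habs']
      rw [← add_div]
      gcongr
  obtain ⟨Bf, Cf⟩ := limsup_facts (hspecf ▸ hγ) hγpos.ne'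
  have hL0 : 0 ≤ L := by rw [hLdef]; positivity
  have htpos : 0 < |t| := abs_pos.mpr ht
  have hLle : L ≤ |t| * ε := by rw [hLdef]; nlinarith
  -- upper bound : intSpec g t ≤ γ + L
  have hCg : Filter.IsCoboundedUnder (· ≤ ·) l ug := by
    obtain ⟨b, hbC⟩ := Cf
    refine ⟨b - (L + 1), fun a ha => ?_⟩
    have ha' : ∀ᶠ ρ in l, ug ρ ≤ a := by simpa [Filter.eventually_map] using ha
    have hwsm : ∀ᶠ ρ in l, w ρ < L + 1 := hwt.eventually_lt_const (by linarith)
    have hfa : ∀ᶠ ρ in l, uf ρ ≤ a + (L + 1) := by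
      filter_upwards [hEvineq, ha', hwsm] with ρ hρ h1 h2
      linarith [hρ.2]
    have := hbC (a + (L+1)) (by simpa [Filter.eventually_map] using hfa)
    linarith
  have hup : intSpec g t ≤ γ + L := by
    rw [hspecg]
    apply le_of_forall_pos_le_add
    intro δ hδ
    have h1 : ∀ᶠ ρ in l, uf ρ < γ + δ/2 := by
      apply Filter.eventually_lt_of_limsup_lt _ Bf
      rw [← hspecf, hγ]; linarith
    have h2 : ∀ᶠ ρ in l, w ρ < L + δ/2 := hwt.eventually_lt_const (by linarith)
    apply Filter.limsup_le_of_le hCg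
    filter_upwards [hEvineq, h1, h2] with ρ hρ ha hb
    have := hρ.1
    linarith
  -- g-side boundedness
  have hBg : Filter.IsBoundedUnder (· ≤ ·) l ug := by
    have h1 : ∀ᶠ ρ in l, uf ρ < γ + 1 := by
      apply Filter.eventually_lt_of_limsup_lt _ Bf
      rw [← hspecf, hγ]; linarith
    have h2 : ∀ᶠ ρ in l, w ρ < L + 1 := hwt.eventually_lt_const (by linarith)
    refine ⟨γ + L + 2, ?_⟩
    rw [Filter.eventually_map]
    filter_upwards [hEvineq, h1, h2] with ρ hρ ha hb
    have := hρ.1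
    linarith
  -- lower bound : γ ≤ intSpec g t + L
  have hlow : γ ≤ intSpec g t + L := by
    apply le_of_forall_pos_le_add
    intro δ hδ
    have h3 : ∀ᶠ ρ in l, ug ρ < Filter.limsup ug l + δ/2 := by
      apply Filter.eventually_lt_of_limsup_lt _ hBg
      linarith
    have h2 : ∀ᶠ ρ in l, w ρ < L + δ/2 := hwt.eventually_lt_const (by linarith)
    have : Filter.limsup uf l ≤ Filter.limsup ug l + L + δ := by
      apply Filter.limsup_le_of_le Cf
      filter_upwards [hEvineq, h3, h2] with ρ hρ ha hb
      have := hρ.2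
      linarith
    rw [← hspecf, hγ] at this
    rw [hspecg]
    linarith
  rw [hγ, abs_le]
  constructor <;> linarith

end Main
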